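/- arXiv:1905.10961 — 5 statements merged into one kernel-verified Lean document; each statement's English description precedes it below -/
import Mathlib

section
/- Suppose Condition 1 holds, Condition 2 holds with constant C satisfying 0 ≤ C < 1/2, and NGD is run with step size η satisfying 0 < η ≤ (1-2C)/(1+C)². Then for every k = 0, 1, 2, …, the residual satisfies ‖u(k) - y‖₂² ≤ (1 - η)^k ‖u(0) - y‖₂². -/
open Matrix MeasureTheory ProbabilityTheory Real
open scoped BigOperators ENNReal NNReal

/-- Euclidean norm of a finitely-indexed real vector. -/
noncomputable def enorm2 {ι : Type*} [Fintype ι] (v : ι → ℝ) : ℝ :=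
  Real.sqrt (∑ i, v i * v i)

/-- Euclidean norm of a vector in `Fin n → ℝ`. -/
noncomputable def vnorm {n : ℕ} (v : Fin n → ℝ) : ℝ := Real.sqrt (v ⬝ᵥ v)

/-- Spectral norm (ℓ²-operator norm) of a matrix. -/
noncomputable def specNorm {ι κ : Type*} [Fintype ι] [Fintype κ] (A : Matrix ι κ ℝ) : ℝ :=
  sSup {r : ℝ | ∃ v : κ → ℝ, enorm2 v = 1 ∧ r = enorm2 (A *ᵥ v)}

/-- Smallest eigenvalue of a symmetric matrix, via the Rayleigh quotient. -/
noncomputable def lamMin {n : ℕ} (A : Matrix (Fin n) (Fin n) ℝ) : ℝ :=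
  sInf {r : ℝ | ∃ v : Fin n → ℝ, vnorm v = 1 ∧ r = v ⬝ᵥ (A *ᵥ v)}

/-- Largest eigenvalue of a symmetric matrix, via the Rayleigh quotient. -/
noncomputable def lamMax {n : ℕ} (A : Matrix (Fin n) (Fin n) ℝ) : ℝ :=
  sSup {r : ℝ | ∃ v : Fin n → ℝ, vnorm v = 1 ∧ r = v ⬝ᵥ (A *ᵥ v)}

/-- Natural gradient descent iterates for a network with outputs `u`, Jacobian `J`,
targets `y`, step size `η`, starting at `θ0`. -/
noncomputable def ngd {n p : ℕ} (J : (Fin p → ℝ) → Matrix (Fin n) (Fin p) ℝ)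
    (u : (Fin p → ℝ) → Fin n → ℝ) (y : Fin n → ℝ) (η : ℝ) (θ0 : Fin p → ℝ) :
    ℕ → Fin p → ℝ
  | 0 => θ0
  | k + 1 =>
      ngd J u y η θ0 k -
        η • ((J (ngd J u y η θ0 k))ᵀ *ᵥ
          ((J (ngd J u y η θ0 k) * (J (ngd J u y η θ0 k))ᵀ)⁻¹ *ᵥ
            (u (ngd J u y η θ0 k) - y)))

/-!
Write `s = √λ₀`, `δ = ‖u(0) - y‖`, `q = √(1 - η)` and `β = (1 - C/3) s`. On the ball of radius
`2δ/β ≤ 3δ/s` around `θ(0)` the Jacobian moves by at most `Cs/3`, so `‖J(θ)ᵀ v‖ ≥ β ‖v‖` there: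
the Gram matrix is invertible and the NGD step `d = J(θ)ᵀ G(θ)⁻¹ r` satisfies `J(θ) d = r` and
`‖d‖ ≤ ‖r‖/β`. The mean value inequality along the step then gives
`r(k+1) = (1 - η) r(k) + E` with `‖E‖ ≤ η (2C/(3 - C)) ‖r(k)‖`, and the step-size condition is what
makes `1 - η + η · 2C/(3 - C) ≤ q`. By induction `‖r(k)‖ ≤ q^k δ` and
`‖θ(k) - θ(0)‖ ≤ (1 - q^k) · 2δ/β`: the step lengths `η q^k δ/β` sum geometrically because
`η = (1 - q)(1 + q) ≤ 2 (1 - q)`, so the iterates never leave the ball.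
-/

open WithLp
open scoped Matrix.Norms.L2Operator

section Norms

variable {ι κ : Type*} [Fintype ι] [Fintype κ]

theorem enorm2_eq_norm (v : ι → ℝ) : enorm2 v = ‖toLp 2 v‖ := by
  simp [enorm2, EuclideanSpace.norm_eq, ← sq]

theorem vnorm_eq_norm {n : ℕ} (v : Fin n → ℝ) : vnorm v = ‖toLp 2 v‖ :=
  enorm2_eq_norm v

theorem specNorm_eq_l2_opNorm [DecidableEq κ] (A : Matrix ι κ ℝ) : specNorm A = ‖A‖ := by
  rw [Matrix.l2_opNorm_def, ← ContinuousLinearMap.sSup_sphere_eq_norm, specNorm]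
  congr 1
  ext r
  constructor
  · rintro ⟨v, hv, rfl⟩
    exact ⟨toLp 2 v, by simpa [enorm2_eq_norm] using hv,
      by simp [enorm2_eq_norm, Matrix.toLpLin_toLp]⟩
  · rintro ⟨x, hx, rfl⟩
    exact ⟨ofLp x, by simpa [enorm2_eq_norm] using hx,
      by simp [enorm2_eq_norm, Matrix.toLpLin_apply]⟩

end Norms

section Gram

variable {m κ : Type*} [Fintype m] [Fintype κ]

theorem dotProduct_gram_mulVec (A : Matrix m κ ℝ) (v : m → ℝ) :
    v ⬝ᵥ ((A * Aᵀ) *ᵥ v) = ‖toLp 2 (Aᵀ *ᵥ v)‖ ^ 2 := by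
  rw [← Matrix.mulVec_mulVec, Matrix.dotProduct_mulVec, ← Matrix.mulVec_transpose,
    ← real_inner_self_eq_norm_sq, EuclideanSpace.inner_toLp_toLp]
  simp

variable {n : ℕ}

theorem bddBelow_rayleigh_gram (A : Matrix (Fin n) κ ℝ) :
    BddBelow {r : ℝ | ∃ v : Fin n → ℝ, vnorm v = 1 ∧ r = v ⬝ᵥ ((A * Aᵀ) *ᵥ v)} := by
  refine ⟨0, ?_⟩
  rintro r ⟨v, -, rfl⟩
  rw [dotProduct_gram_mulVec]
  positivity

theorem sqrt_lamMin_gram_mul_norm_le (A : Matrix (Fin n) κ ℝ) (v : Fin n → ℝ) :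
    √(lamMin (A * Aᵀ)) * ‖toLp 2 v‖ ≤ ‖toLp 2 (Aᵀ *ᵥ v)‖ := by
  rcases eq_or_ne v 0 with rfl | hv
  · simp
  have hc : 0 < ‖toLp 2 v‖ := by simpa using hv
  set w := ‖toLp 2 v‖⁻¹ • v
  have hw : vnorm w = 1 := by
    rw [vnorm_eq_norm, WithLp.toLp_smul, norm_smul, norm_inv, norm_norm, inv_mul_cancel₀ hc.ne']
  have hle : lamMin (A * Aᵀ) ≤ (‖toLp 2 (Aᵀ *ᵥ v)‖ / ‖toLp 2 v‖) ^ 2 := by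
    refine (csInf_le (bddBelow_rayleigh_gram A) ⟨w, hw, rfl⟩).trans_eq ?_
    rw [dotProduct_gram_mulVec, Matrix.mulVec_smul, WithLp.toLp_smul, norm_smul, norm_inv,
      norm_norm, inv_mul_eq_div]
  calc √(lamMin (A * Aᵀ)) * ‖toLp 2 v‖
      ≤ ‖toLp 2 (Aᵀ *ᵥ v)‖ / ‖toLp 2 v‖ * ‖toLp 2 v‖ := by
        gcongr
        exact Real.sqrt_le_left (by positivity) |>.mpr hle
    _ = ‖toLp 2 (Aᵀ *ᵥ v)‖ := div_mul_cancel₀ _ hc.ne'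

theorem lamMin_gram_pos [Nonempty (Fin n)] (A : Matrix (Fin n) κ ℝ) (hA : (A * Aᵀ).PosDef) :
    0 < lamMin (A * Aᵀ) := by
  have hinj : LinearMap.ker (Matrix.toEuclideanLin Aᵀ) = ⊥ := by
    refine LinearMap.ker_eq_bot'.mpr fun x hx => ?_
    by_contra hx0
    have := hA.dotProduct_mulVec_pos (x := ofLp x) (by simpa using hx0)
    rw [star_trivial, dotProduct_gram_mulVec] at this
    simp_all [Matrix.toLpLin_apply]
  obtain ⟨K, hK, hanti⟩ := (Matrix.toEuclideanLin Aᵀ).exists_antilipschitzWith hinj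
  have hrayleigh : ∀ v : Fin n → ℝ, vnorm v = 1 → ((K : ℝ) ^ 2)⁻¹ ≤ v ⬝ᵥ ((A * Aᵀ) *ᵥ v) := by
    intro v hv
    have := ZeroHomClass.bound_of_antilipschitz _ hanti (toLp 2 v)
    rw [dotProduct_gram_mulVec, ← inv_pow, inv_eq_one_div]
    rw [vnorm_eq_norm] at hv
    simp only [hv, Matrix.toLpLin_toLp, Matrix.toLin'_apply] at this
    gcongr
    rwa [div_le_iff₀' (by positivity)]
  obtain ⟨i⟩ := ‹Nonempty (Fin n)›
  have hsingle : vnorm (Pi.single i 1) = 1 := by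
    rw [vnorm_eq_norm, PiLp.toLp_single, PiLp.norm_single, norm_one]
  refine lt_of_lt_of_le (b := ((K : ℝ) ^ 2)⁻¹) (by positivity)
    (le_csInf ⟨_, Pi.single i 1, hsingle, rfl⟩ ?_)
  rintro r ⟨v, hv, rfl⟩
  exact hrayleigh v hv

end Gram

section GramInverse

variable {m κ : Type*} [Fintype m] [Fintype κ] [DecidableEq m]

theorem norm_transpose_mulVec_le [DecidableEq κ] (B : Matrix m κ ℝ) (v : m → ℝ) :
    ‖toLp 2 (Bᵀ *ᵥ v)‖ ≤ ‖B‖ * ‖toLp 2 v‖ := by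
  have := Matrix.l2_opNorm_mulVec Bᴴ (toLp 2 v)
  rw [Matrix.l2_opNorm_conjTranspose] at this
  simpa using this

theorem transpose_lowerBound_of_norm_sub_le [DecidableEq κ] {A A₀ : Matrix m κ ℝ} {s ε : ℝ}
    (hA₀ : ∀ v : m → ℝ, s * ‖toLp 2 v‖ ≤ ‖toLp 2 (A₀ᵀ *ᵥ v)‖) (hA : ‖A - A₀‖ ≤ ε)
    (v : m → ℝ) : (s - ε) * ‖toLp 2 v‖ ≤ ‖toLp 2 (Aᵀ *ᵥ v)‖ := by
  have hsplit : toLp 2 (A₀ᵀ *ᵥ v) = toLp 2 (Aᵀ *ᵥ v) - toLp 2 ((A - A₀)ᵀ *ᵥ v) := by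
    rw [← WithLp.toLp_sub, Matrix.transpose_sub, Matrix.sub_mulVec, sub_sub_cancel]
  have hpert : ‖toLp 2 ((A - A₀)ᵀ *ᵥ v)‖ ≤ ε * ‖toLp 2 v‖ :=
    (norm_transpose_mulVec_le _ v).trans (by gcongr)
  have := norm_sub_le (toLp 2 (Aᵀ *ᵥ v)) (toLp 2 ((A - A₀)ᵀ *ᵥ v))
  rw [← hsplit] at this
  linarith [hA₀ v]

variable {A : Matrix m κ ℝ} {β : ℝ}

theorem isUnit_gram_of_lowerBound (hβ : 0 < β)
    (hA : ∀ v : m → ℝ, β * ‖toLp 2 v‖ ≤ ‖toLp 2 (Aᵀ *ᵥ v)‖) : IsUnit (A * Aᵀ) := by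
  refine Matrix.mulVec_injective_iff_isUnit.mp fun v w hvw => ?_
  have hker : (A * Aᵀ) *ᵥ (v - w) = 0 := by rw [Matrix.mulVec_sub, hvw, sub_self]
  have hnorm : ‖toLp 2 (Aᵀ *ᵥ (v - w))‖ = 0 := by
    simpa [hker] using (dotProduct_gram_mulVec A (v - w)).symm
  have := hA (v - w)
  rw [hnorm] at this
  have : ‖toLp 2 (v - w)‖ = 0 := le_antisymm (nonpos_of_mul_nonpos_right this hβ) (norm_nonneg _)
  simpa [sub_eq_zero] using this

theorem mulVec_transpose_gram_inv_mulVec (hA : IsUnit (A * Aᵀ)) (r : m → ℝ) :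
    A *ᵥ (Aᵀ *ᵥ ((A * Aᵀ)⁻¹ *ᵥ r)) = r := by
  rw [Matrix.mulVec_mulVec, Matrix.mulVec_mulVec,
    Matrix.mul_nonsing_inv _ ((Matrix.isUnit_iff_isUnit_det _).mp hA), Matrix.one_mulVec]

theorem norm_transpose_gram_inv_mulVec_le (hβ : 0 < β)
    (hA : ∀ v : m → ℝ, β * ‖toLp 2 v‖ ≤ ‖toLp 2 (Aᵀ *ᵥ v)‖) (r : m → ℝ) :
    β * ‖toLp 2 (Aᵀ *ᵥ ((A * Aᵀ)⁻¹ *ᵥ r))‖ ≤ ‖toLp 2 r‖ := by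
  set w := (A * Aᵀ)⁻¹ *ᵥ r
  set x := ‖toLp 2 (Aᵀ *ᵥ w)‖
  have hGw : (A * Aᵀ) *ᵥ w = r := by
    rw [← Matrix.mulVec_mulVec]
    exact mulVec_transpose_gram_inv_mulVec (isUnit_gram_of_lowerBound hβ hA) r
  have hsq : x ^ 2 ≤ ‖toLp 2 w‖ * ‖toLp 2 r‖ := by
    have hdot : w ⬝ᵥ r = x ^ 2 := by rw [← hGw, dotProduct_gram_mulVec]
    have := real_inner_le_norm (toLp 2 r) (toLp 2 w)
    rwa [EuclideanSpace.inner_toLp_toLp, star_trivial, hdot, mul_comm] at this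
  have hx : β * x ^ 2 ≤ x * ‖toLp 2 r‖ := by nlinarith [hA w, norm_nonneg (toLp 2 r)]
  by_contra! h
  nlinarith [norm_nonneg (toLp 2 r), norm_nonneg (toLp 2 (Aᵀ *ᵥ w))]

end GramInverse

section Linearization

variable {m κ : Type*} [Fintype m] [Fintype κ]

theorem convex_setOf_norm_toLp_sub_le (c : κ → ℝ) (R : ℝ) :
    Convex ℝ {x : κ → ℝ | ‖toLp 2 (x - c)‖ ≤ R} := by
  have := (convex_closedBall (toLp 2 c) R).linear_preimage
    (WithLp.linearEquiv 2 ℝ (κ → ℝ)).symm.toLinearMap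
  simpa [Set.preimage, dist_eq_norm] using this

theorem norm_sub_sub_mulVec_le [DecidableEq κ] {u : (κ → ℝ) → m → ℝ} {J : (κ → ℝ) → Matrix m κ ℝ}
    (hJ : ∀ θ, HasFDerivAt u (LinearMap.toContinuousLinearMap (J θ).mulVecLin) θ)
    {a b : κ → ℝ} {K : ℝ} (hK : ∀ x ∈ segment ℝ a b, ‖J x - J a‖ ≤ K) :
    ‖toLp 2 (u b - u a - J a *ᵥ (b - a))‖ ≤ K * ‖toLp 2 (b - a)‖ := by
  let L : Matrix m κ ℝ ≃ₗ[ℝ] (EuclideanSpace ℝ κ →L[ℝ] EuclideanSpace ℝ m) :=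
    Matrix.toEuclideanLin.trans LinearMap.toContinuousLinearMap
  have hderiv : ∀ x : EuclideanSpace ℝ κ,
      HasFDerivAt (fun x => toLp 2 (u (ofLp x))) (L (J (ofLp x))) x := by
    intro x
    have hL : L (J (ofLp x)) = ((EuclideanSpace.equiv m ℝ).symm : (m → ℝ) →L[ℝ] _).comp
        ((LinearMap.toContinuousLinearMap (J (ofLp x)).mulVecLin).comp
          (EuclideanSpace.equiv κ ℝ : EuclideanSpace ℝ κ →L[ℝ] _)) :=
      ContinuousLinearMap.ext fun _ => rfl
    rw [hL]
    exact (EuclideanSpace.equiv m ℝ).symm.hasFDerivAt.comp x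
      ((hJ (ofLp x)).comp x (EuclideanSpace.equiv κ ℝ).hasFDerivAt)
  have hsegment : segment ℝ (toLp 2 a) (toLp 2 b) = toLp 2 '' segment ℝ a b :=
    (image_segment ℝ (WithLp.linearEquiv 2 ℝ (κ → ℝ)).symm.toLinearMap.toAffineMap a b).symm
  have := Convex.norm_image_sub_le_of_norm_hasFDerivWithin_le'
    (fun x _ => (hderiv x).hasFDerivWithinAt) (φ := L (J a)) (C := K)
    (fun x hx => by
      rw [hsegment] at hx
      obtain ⟨x, hx, rfl⟩ := hx
      rw [← map_sub]
      exact hK x hx)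
    (convex_segment _ _) (left_mem_segment ℝ _ _) (right_mem_segment ℝ _ _)
  simpa [L, Matrix.toLpLin_apply] using this

theorem norm_sub_le_two_mul_of_mem_segment {E : Type*} [SeminormedAddCommGroup E]
    {J : (κ → ℝ) → E} {θ₀ a b : κ → ℝ} {R ε : ℝ}
    (hstab : ∀ θ, ‖toLp 2 (θ - θ₀)‖ ≤ R → ‖J θ - J θ₀‖ ≤ ε)
    (ha : ‖toLp 2 (a - θ₀)‖ ≤ R) (hb : ‖toLp 2 (b - θ₀)‖ ≤ R) :
    ∀ x ∈ segment ℝ a b, ‖J x - J a‖ ≤ 2 * ε := by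
  intro x hx
  have hxR : ‖toLp 2 (x - θ₀)‖ ≤ R := (convex_setOf_norm_toLp_sub_le θ₀ R).segment_subset ha hb hx
  have := norm_sub_le_norm_sub_add_norm_sub (J x) (J θ₀) (J a)
  rw [norm_sub_rev (J θ₀)] at this
  linarith [hstab x hxR, hstab a ha]

end Linearization

section Step

variable {m κ : Type*} [Fintype m] [Fintype κ] [DecidableEq m]

noncomputable def ngdDirection (J : (κ → ℝ) → Matrix m κ ℝ) (u : (κ → ℝ) → m → ℝ) (y : m → ℝ)
    (θ : κ → ℝ) : κ → ℝ :=
  (J θ)ᵀ *ᵥ ((J θ * (J θ)ᵀ)⁻¹ *ᵥ (u θ - y))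

theorem ngd_succ {n p : ℕ} (J : (Fin p → ℝ) → Matrix (Fin n) (Fin p) ℝ)
    (u : (Fin p → ℝ) → Fin n → ℝ) (y : Fin n → ℝ) (η : ℝ) (θ₀ : Fin p → ℝ) (k : ℕ) :
    ngd J u y η θ₀ (k + 1) = ngd J u y η θ₀ k - η • ngdDirection J u y (ngd J u y η θ₀ k) :=
  rfl

theorem norm_sub_smul_sub_le_one_sub_pow_succ_mul {θ d θ₀ : κ → ℝ} {η q R : ℝ} {k : ℕ}
    (hη : 0 ≤ η) (hθ : ‖toLp 2 (θ - θ₀)‖ ≤ (1 - q ^ k) * R)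
    (hd : η * ‖toLp 2 d‖ ≤ q ^ k * (1 - q) * R) :
    ‖toLp 2 (θ - η • d - θ₀)‖ ≤ (1 - q ^ (k + 1)) * R :=
  calc ‖toLp 2 (θ - η • d - θ₀)‖ = ‖toLp 2 (θ - θ₀) - η • toLp 2 d‖ := by
        rw [← WithLp.toLp_smul, ← WithLp.toLp_sub, sub_right_comm]
    _ ≤ (1 - q ^ k) * R + q ^ k * (1 - q) * R := by
        refine (norm_sub_le _ _).trans (add_le_add hθ ?_)
        rwa [norm_smul, Real.norm_of_nonneg hη]
    _ = (1 - q ^ (k + 1)) * R := by ring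

variable [DecidableEq κ] {u : (κ → ℝ) → m → ℝ} {J : (κ → ℝ) → Matrix m κ ℝ} {y : m → ℝ}
  {θ : κ → ℝ} {η β K : ℝ}

theorem norm_residual_ngd_step_le
    (hJ : ∀ θ, HasFDerivAt u (LinearMap.toContinuousLinearMap (J θ).mulVecLin) θ)
    (hβ : 0 < β) (hlow : ∀ v : m → ℝ, β * ‖toLp 2 v‖ ≤ ‖toLp 2 ((J θ)ᵀ *ᵥ v)‖)
    (hη0 : 0 ≤ η) (hη1 : η ≤ 1) (hK : 0 ≤ K)
    (hseg : ∀ x ∈ segment ℝ θ (θ - η • ngdDirection J u y θ), ‖J x - J θ‖ ≤ K) :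
    ‖toLp 2 (u (θ - η • ngdDirection J u y θ) - y)‖ ≤
      (1 - η + η * (K / β)) * ‖toLp 2 (u θ - y)‖ := by
  set d := ngdDirection J u y θ
  set r := u θ - y
  have hJd : J θ *ᵥ d = r :=
    mulVec_transpose_gram_inv_mulVec (isUnit_gram_of_lowerBound hβ hlow) r
  have hd : ‖toLp 2 d‖ ≤ ‖toLp 2 r‖ / β := by
    rw [le_div_iff₀ hβ, mul_comm]
    exact norm_transpose_gram_inv_mulVec_le hβ hlow r
  have hlin := norm_sub_sub_mulVec_le hJ hseg
  have hdecomp : u (θ - η • d) - y =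
      (u (θ - η • d) - u θ - J θ *ᵥ (θ - η • d - θ)) + (1 - η) • r := by
    rw [sub_sub_cancel_left, Matrix.mulVec_neg, Matrix.mulVec_smul, hJd, sub_smul, one_smul]
    simp only [r]
    abel
  have hstep : ‖toLp 2 (θ - η • d - θ)‖ = η * ‖toLp 2 d‖ := by
    rw [sub_sub_cancel_left, WithLp.toLp_neg, norm_neg, WithLp.toLp_smul, norm_smul,
      Real.norm_of_nonneg hη0]
  calc ‖toLp 2 (u (θ - η • d) - y)‖
      ≤ K * (η * ‖toLp 2 d‖) + (1 - η) * ‖toLp 2 r‖ := by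
        rw [hdecomp, WithLp.toLp_add, WithLp.toLp_smul, ← hstep]
        refine (norm_add_le _ _).trans (add_le_add hlin ?_)
        rw [norm_smul, Real.norm_of_nonneg (by linarith)]
    _ ≤ K * (η * (‖toLp 2 r‖ / β)) + (1 - η) * ‖toLp 2 r‖ := by gcongr
    _ = (1 - η + η * (K / β)) * ‖toLp 2 r‖ := by ring

end Step

section Convergence

variable {n p : ℕ} {u : (Fin p → ℝ) → Fin n → ℝ} {J : (Fin p → ℝ) → Matrix (Fin n) (Fin p) ℝ}
  {y : Fin n → ℝ} {θ₀ : Fin p → ℝ} {η s ε : ℝ}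

theorem ngd_residual_and_displacement_le
    (hJ : ∀ θ, HasFDerivAt u (LinearMap.toContinuousLinearMap (J θ).mulVecLin) θ)
    (hlow : ∀ v : Fin n → ℝ, s * ‖toLp 2 v‖ ≤ ‖toLp 2 ((J θ₀)ᵀ *ᵥ v)‖)
    (hε : 0 ≤ ε) (hεs : ε < s) (hη0 : 0 < η) (hη1 : η ≤ 1)
    (hρ : 1 - η + η * (2 * ε / (s - ε)) ≤ √(1 - η))
    (hstab : ∀ θ, ‖toLp 2 (θ - θ₀)‖ ≤ 2 * ‖toLp 2 (u θ₀ - y)‖ / (s - ε) →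
      ‖J θ - J θ₀‖ ≤ ε) (k : ℕ) :
    ‖toLp 2 (u (ngd J u y η θ₀ k) - y)‖ ≤ √(1 - η) ^ k * ‖toLp 2 (u θ₀ - y)‖ ∧
      ‖toLp 2 (ngd J u y η θ₀ k - θ₀)‖ ≤
        (1 - √(1 - η) ^ k) * (2 * ‖toLp 2 (u θ₀ - y)‖ / (s - ε)) := by
  set q := √(1 - η)
  set δ := ‖toLp 2 (u θ₀ - y)‖
  set R := 2 * δ / (s - ε)
  have hβ : 0 < s - ε := sub_pos.mpr hεs
  have hq0 : 0 ≤ q := Real.sqrt_nonneg _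
  have hq1 : q ≤ 1 := Real.sqrt_le_one.mpr (by linarith)
  have hηq : η ≤ 2 * (1 - q) := by nlinarith [Real.sq_sqrt (by linarith : 0 ≤ 1 - η)]
  induction k with
  | zero => simp [ngd, δ]
  | succ k ih =>
    obtain ⟨hres, hdist⟩ := ih
    set θ := ngd J u y η θ₀ k
    set d := ngdDirection J u y θ
    have hR : 0 ≤ R := by positivity
    have hθ : ‖toLp 2 (θ - θ₀)‖ ≤ R :=
      hdist.trans (mul_le_of_le_one_left hR (by linarith [pow_nonneg hq0 k]))
    have hlowθ : ∀ v : Fin n → ℝ, (s - ε) * ‖toLp 2 v‖ ≤ ‖toLp 2 ((J θ)ᵀ *ᵥ v)‖ :=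
      transpose_lowerBound_of_norm_sub_le hlow (hstab θ hθ)
    have hd : (s - ε) * ‖toLp 2 d‖ ≤ ‖toLp 2 (u θ - y)‖ :=
      norm_transpose_gram_inv_mulVec_le hβ hlowθ _
    have hηd : η * ‖toLp 2 d‖ ≤ q ^ k * (1 - q) * R := by
      have hd' : ‖toLp 2 d‖ ≤ q ^ k * δ / (s - ε) := by
        rw [le_div_iff₀ hβ]
        linarith
      calc η * ‖toLp 2 d‖ ≤ 2 * (1 - q) * (q ^ k * δ / (s - ε)) := by gcongr
        _ = q ^ k * (1 - q) * R := by ring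
    have hdist' := norm_sub_smul_sub_le_one_sub_pow_succ_mul hη0.le hdist hηd
    have hseg := norm_sub_le_two_mul_of_mem_segment hstab hθ
      (hdist'.trans (mul_le_of_le_one_left hR (by linarith [pow_nonneg hq0 (k + 1)])))
    rw [ngd_succ]
    refine ⟨?_, hdist'⟩
    calc ‖toLp 2 (u (θ - η • d) - y)‖ ≤ (1 - η + η * (2 * ε / (s - ε))) * ‖toLp 2 (u θ - y)‖ :=
          norm_residual_ngd_step_le hJ hβ hlowθ hη0.le hη1 (by positivity) hseg
      _ ≤ q * (q ^ k * δ) := by gcongr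
      _ = q ^ (k + 1) * δ := by ring

theorem norm_residual_ngd_sq_le
    (hJ : ∀ θ, HasFDerivAt u (LinearMap.toContinuousLinearMap (J θ).mulVecLin) θ)
    (hlow : ∀ v : Fin n → ℝ, s * ‖toLp 2 v‖ ≤ ‖toLp 2 ((J θ₀)ᵀ *ᵥ v)‖)
    (hε : 0 ≤ ε) (hεs : ε < s) (hη0 : 0 < η) (hη1 : η ≤ 1)
    (hρ : (1 - η + η * (2 * ε / (s - ε))) ^ 2 ≤ 1 - η)
    (hstab : ∀ θ, ‖toLp 2 (θ - θ₀)‖ ≤ 2 * ‖toLp 2 (u θ₀ - y)‖ / (s - ε) →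
      ‖J θ - J θ₀‖ ≤ ε) (k : ℕ) :
    ‖toLp 2 (u (ngd J u y η θ₀ k) - y)‖ ^ 2 ≤ (1 - η) ^ k * ‖toLp 2 (u θ₀ - y)‖ ^ 2 :=
  calc ‖toLp 2 (u (ngd J u y η θ₀ k) - y)‖ ^ 2
      ≤ (√(1 - η) ^ k * ‖toLp 2 (u θ₀ - y)‖) ^ 2 := by
        gcongr
        exact (ngd_residual_and_displacement_le hJ hlow hε hεs hη0 hη1
          (Real.le_sqrt_of_sq_le hρ) hstab k).1
    _ = (1 - η) ^ k * ‖toLp 2 (u θ₀ - y)‖ ^ 2 := by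
        rw [mul_pow, ← pow_mul, mul_comm k, pow_mul, Real.sq_sqrt (by linarith)]

end Convergence

theorem ngd_rate_sq_le {C η : ℝ} (hC0 : 0 ≤ C) (hC : C < 1 / 2) (hη0 : 0 < η)
    (hη : η ≤ (1 - 2 * C) / (1 + C) ^ 2) :
    (1 - η + η * (2 * C / (3 - C))) ^ 2 ≤ 1 - η := by
  have h3C : 0 < 3 - C := by linarith
  have hη' : η * (1 + C) ^ 2 ≤ 1 - 2 * C := (le_div_iff₀ (by positivity)).mp hη
  have key : η * (9 * (1 - C) ^ 2) ≤ 9 - 18 * C + 5 * C ^ 2 := by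
    nlinarith [mul_nonneg hC0 hC0, mul_nonneg (mul_nonneg hC0 hC0) hC0,
      mul_nonneg (mul_nonneg (mul_nonneg hC0 hC0) hC0) hC0]
  have hform : 1 - η + η * (2 * C / (3 - C)) = (3 - C - 3 * η * (1 - C)) / (3 - C) := by
    field_simp
    ring
  rw [hform, div_pow, div_le_iff₀ (by positivity)]
  nlinarith [mul_le_mul_of_nonneg_left key hη0.le]

theorem ngd_linear_convergence_general {n p : ℕ}
    (u : (Fin p → ℝ) → Fin n → ℝ) (J : (Fin p → ℝ) → Matrix (Fin n) (Fin p) ℝ)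
    (hJ : ∀ θ, HasFDerivAt u (LinearMap.toContinuousLinearMap ((J θ).mulVecLin)) θ)
    (y : Fin n → ℝ) (θ0 : Fin p → ℝ)
    -- Condition 1: the Gram matrix at initialization is positive definite
    (hG0 : (J θ0 * (J θ0)ᵀ).PosDef)
    -- Condition 2: C-stable Jacobian, 0 ≤ C < 1/2
    (C : ℝ) (hC0 : 0 ≤ C) (hC : C < 1 / 2)
    (hstab : ∀ θ : Fin p → ℝ,
      vnorm (θ - θ0) ≤ 3 * vnorm (y - u θ0) / Real.sqrt (lamMin (J θ0 * (J θ0)ᵀ)) →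
      specNorm (J θ - J θ0) ≤ C / 3 * Real.sqrt (lamMin (J θ0 * (J θ0)ᵀ)))
    (η : ℝ) (hη0 : 0 < η) (hη : η ≤ (1 - 2 * C) / (1 + C) ^ 2) :
    ∀ k : ℕ, vnorm (u (ngd J u y η θ0 k) - y) ^ 2 ≤
      (1 - η) ^ k * vnorm (u θ0 - y) ^ 2 := by
  intro k
  -- for `n = 0` the Rayleigh set is empty and `lamMin = sInf ∅ = 0`; both sides vanish
  rcases isEmpty_or_nonempty (Fin n) with hn | hn
  · simp [vnorm, dotProduct]
  set s := √(lamMin (J θ0 * (J θ0)ᵀ))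
  have hs : 0 < s := Real.sqrt_pos.mpr (lamMin_gram_pos _ hG0)
  have hη1 : η ≤ 1 := hη.trans (div_le_one_of_le₀ (by nlinarith) (by positivity))
  have hrate : 2 * (C / 3 * s) / (s - C / 3 * s) = 2 * C / (3 - C) := by
    field_simp
  have hball : ∀ θ, ‖toLp 2 (θ - θ0)‖ ≤ 2 * ‖toLp 2 (u θ0 - y)‖ / (s - C / 3 * s) →
      ‖J θ - J θ0‖ ≤ C / 3 * s := by
    intro θ hθ
    rw [← specNorm_eq_l2_opNorm]
    refine hstab θ ?_
    rw [vnorm_eq_norm, vnorm_eq_norm, WithLp.toLp_sub 2 y, norm_sub_rev, ← WithLp.toLp_sub]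
    refine hθ.trans ?_
    rw [div_le_div_iff₀ (by nlinarith) hs]
    nlinarith [mul_nonneg (mul_nonneg (norm_nonneg (toLp 2 (u θ0 - y))) hs.le)
      (by linarith : (0 : ℝ) ≤ 1 - C)]
  simpa only [vnorm_eq_norm] using norm_residual_ngd_sq_le hJ
    (sqrt_lamMin_gram_mul_norm_le (J θ0)) (by positivity) (by nlinarith) hη0 hη1
    (hrate ▸ ngd_rate_sq_le hC0 hC hη0 hη) hball k

/-- **Theorem 1 (Natural gradient descent).**
Under Condition 1 (the Gram matrix at initialization is positive definite) and
Condition 2 (`C`-stable Jacobian with `0 ≤ C < 1/2`), NGD with step size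
`0 < η ≤ (1 - 2C)/(1 + C)²` satisfies
`‖u(k) - y‖² ≤ (1 - η)^k ‖u(0) - y‖²` for all `k`. -/
theorem ngd_linear_convergence {n p : ℕ}
    (u : (Fin p → ℝ) → Fin n → ℝ) (J : (Fin p → ℝ) → Matrix (Fin n) (Fin p) ℝ)
    (hJ : ∀ θ, HasFDerivAt u (LinearMap.toContinuousLinearMap ((J θ).mulVecLin)) θ)
    (hJcont : Continuous J)
    (y : Fin n → ℝ) (θ0 : Fin p → ℝ)
    -- Condition 1: the Gram matrix at initialization is positive definite
    (hG0 : (J θ0 * (J θ0)ᵀ).PosDef)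
    -- Condition 2: C-stable Jacobian, 0 ≤ C < 1/2
    (C : ℝ) (hC0 : 0 ≤ C) (hC : C < 1 / 2)
    (hstab : ∀ θ : Fin p → ℝ,
      vnorm (θ - θ0) ≤ 3 * vnorm (y - u θ0) / Real.sqrt (lamMin (J θ0 * (J θ0)ᵀ)) →
      specNorm (J θ - J θ0) ≤ C / 3 * Real.sqrt (lamMin (J θ0 * (J θ0)ᵀ)))
    (η : ℝ) (hη0 : 0 < η) (hη : η ≤ (1 - 2 * C) / (1 + C) ^ 2) :
    ∀ k : ℕ, vnorm (u (ngd J u y η θ0 k) - y) ^ 2 ≤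
      (1 - η) ^ k * vnorm (u θ0 - y) ^ 2 :=
  ngd_linear_convergence_general u J hJ y θ0 hG0 C hC0 hC hstab η hη0 hη
end

section
/- Suppose Conditions 1 and 2 hold with 0 ≤ C < 1/2 and NGD is run with step size 0 < η ≤ (1-2C)/(1+C)². If for every s = 0, …, k one has λmin(G(s)) ≥ (4/9)·λmin(G(0)) and ‖y - u(s)‖₂ ≤ (1-η)^{s/2}·‖y - u(0)‖₂, then ‖θ(k+1) - θ(0)‖₂ ≤ 3‖y - u(0)‖₂ / √λmin(G(0)). -/
open Matrix MeasureTheory ProbabilityTheory Real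
open scoped BigOperators ENNReal NNReal

/-!
Each NGD step has length `η ‖Jᵀ G⁻¹ r‖`, and `‖Jᵀ G⁻¹ r‖² = ⟪r, G⁻¹ r⟫ ≤ ‖r‖² / λmin(G)`.
With `λmin(G(s)) ≥ (4/9) λmin(G(0))` and `‖r(s)‖ ≤ q^s ‖r(0)‖` for `q = √(1 - η)`, the `s`-th step
is at most `(3/2) η q^s ‖r(0)‖ / √λmin(G(0))`. Since `η = (1 - q)(1 + q)`, the geometric sum gives
`η ∑ q^s ≤ 1 + q ≤ 2`, and the triangle inequality along the trajectory finishes the proof.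
-/

section Vnorm

variable {m : ℕ}

lemma vnorm_eq_norm_toLp (v : Fin m → ℝ) : vnorm v = ‖WithLp.toLp 2 v‖ := by
  simp [vnorm, EuclideanSpace.norm_eq, dotProduct, Real.norm_eq_abs, sq]

lemma vnorm_nonneg (v : Fin m → ℝ) : 0 ≤ vnorm v := Real.sqrt_nonneg _

lemma vnorm_sq (v : Fin m → ℝ) : vnorm v ^ 2 = v ⬝ᵥ v :=
  Real.sq_sqrt (by simpa using dotProduct_star_self_nonneg v)

lemma vnorm_pos {v : Fin m → ℝ} (hv : v ≠ 0) : 0 < vnorm v := by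
  rw [vnorm_eq_norm_toLp, norm_pos_iff]
  exact fun h => hv (by simpa using congrArg WithLp.ofLp h)

lemma vnorm_smul (c : ℝ) (v : Fin m → ℝ) : vnorm (c • v) = |c| * vnorm v := by
  rw [vnorm_eq_norm_toLp, vnorm_eq_norm_toLp, WithLp.toLp_smul, norm_smul, Real.norm_eq_abs]

lemma vnorm_sub_comm (v w : Fin m → ℝ) : vnorm (v - w) = vnorm (w - v) := by
  rw [vnorm_eq_norm_toLp, vnorm_eq_norm_toLp, WithLp.toLp_sub, WithLp.toLp_sub, norm_sub_rev]

lemma dotProduct_le_vnorm_mul_vnorm (v w : Fin m → ℝ) : v ⬝ᵥ w ≤ vnorm v * vnorm w := by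
  simpa only [vnorm, dotProduct, sq] using Real.sum_mul_le_sqrt_mul_sqrt Finset.univ v w

lemma vnorm_sub_le_range_sum_of_le {f : ℕ → Fin m → ℝ} {d : ℕ → ℝ} (k : ℕ)
    (hd : ∀ s < k, vnorm (f (s + 1) - f s) ≤ d s) :
    vnorm (f k - f 0) ≤ ∑ s ∈ Finset.range k, d s := by
  have hdist (a b : Fin m → ℝ) : dist (WithLp.toLp 2 a) (WithLp.toLp 2 b) = vnorm (b - a) := by
    rw [dist_comm, dist_eq_norm, ← WithLp.toLp_sub, vnorm_eq_norm_toLp]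
  rw [← hdist]
  exact dist_le_range_sum_of_dist_le k fun hs => (hdist _ _).trans_le (hd _ hs)

lemma isCompact_setOf_vnorm_eq_one : IsCompact {v : Fin m → ℝ | vnorm v = 1} := by
  have hsphere : {v : Fin m → ℝ | vnorm v = 1} =
      WithLp.ofLp '' Metric.sphere (0 : EuclideanSpace ℝ (Fin m)) 1 := by
    rw [Set.image_eq_preimage_of_inverse (WithLp.toLp_ofLp 2) (WithLp.ofLp_toLp 2)]
    ext v
    simp [vnorm_eq_norm_toLp]
  rw [hsphere]
  exact (isCompact_sphere _ _).image (PiLp.continuous_ofLp 2 _)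

end Vnorm

section Rayleigh

variable {n : ℕ}

lemma isCompact_rayleigh_quotients (A : Matrix (Fin n) (Fin n) ℝ) :
    IsCompact {r : ℝ | ∃ v : Fin n → ℝ, vnorm v = 1 ∧ r = v ⬝ᵥ (A *ᵥ v)} := by
  have himage : {r : ℝ | ∃ v : Fin n → ℝ, vnorm v = 1 ∧ r = v ⬝ᵥ (A *ᵥ v)} =
      (fun v => v ⬝ᵥ (A *ᵥ v)) '' {v | vnorm v = 1} := by
    ext r
    simp [eq_comm]
  rw [himage]
  exact isCompact_setOf_vnorm_eq_one.image (by fun_prop)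

lemma lamMin_le_dotProduct_mulVec (A : Matrix (Fin n) (Fin n) ℝ) {v : Fin n → ℝ}
    (hv : vnorm v = 1) : lamMin A ≤ v ⬝ᵥ (A *ᵥ v) :=
  csInf_le (isCompact_rayleigh_quotients A).bddBelow ⟨v, hv, rfl⟩

lemma lamMin_mul_dotProduct_self_le (A : Matrix (Fin n) (Fin n) ℝ) (v : Fin n → ℝ) :
    lamMin A * (v ⬝ᵥ v) ≤ v ⬝ᵥ (A *ᵥ v) := by
  rcases eq_or_ne v 0 with rfl | hv
  · simp
  have hc := vnorm_pos hv
  have hunit : vnorm ((vnorm v)⁻¹ • v) = 1 := by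
    rw [vnorm_smul, abs_inv, abs_of_pos hc, inv_mul_cancel₀ hc.ne']
  have h := lamMin_le_dotProduct_mulVec A hunit
  rw [mulVec_smul, dotProduct_smul, smul_dotProduct, smul_eq_mul, smul_eq_mul] at h
  calc lamMin A * (v ⬝ᵥ v)
      ≤ (vnorm v)⁻¹ * ((vnorm v)⁻¹ * (v ⬝ᵥ (A *ᵥ v))) * vnorm v ^ 2 := by
        rw [vnorm_sq]; gcongr; exact dotProduct_star_self_nonneg v
    _ = v ⬝ᵥ (A *ᵥ v) := by field_simp

lemma lamMin_pos_of_posDef (hn : n ≠ 0) {A : Matrix (Fin n) (Fin n) ℝ} (hA : A.PosDef) :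
    0 < lamMin A := by
  have hne : {r : ℝ | ∃ v : Fin n → ℝ, vnorm v = 1 ∧ r = v ⬝ᵥ (A *ᵥ v)}.Nonempty :=
    ⟨_, Pi.single ⟨0, Nat.pos_of_ne_zero hn⟩ 1, by simp [vnorm], rfl⟩
  obtain ⟨v, hv, hmin⟩ := (isCompact_rayleigh_quotients A).sInf_mem hne
  have hv0 : v ≠ 0 := by rintro rfl; simp [vnorm] at hv
  rw [lamMin, hmin]
  simpa using hA.dotProduct_mulVec_pos hv0

end Rayleigh

lemma lamMin_mul_vnorm_sq_le {n p : ℕ} (J : Matrix (Fin n) (Fin p) ℝ) (r : Fin n → ℝ) :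
    lamMin (J * Jᵀ) * vnorm (Jᵀ *ᵥ ((J * Jᵀ)⁻¹ *ᵥ r)) ^ 2 ≤ vnorm r ^ 2 := by
  set G := J * Jᵀ
  rcases le_or_gt (lamMin G) 0 with hl | hl
  · exact (mul_nonpos_of_nonpos_of_nonneg hl (sq_nonneg _)).trans (sq_nonneg _)
  have hG : G.PosDef := by
    refine .of_dotProduct_mulVec_pos ?_ fun x hx => ?_
    · simpa using isHermitian_mul_conjTranspose_self J
    · simpa using (mul_pos hl (by simpa [vnorm_sq] using pow_pos (vnorm_pos hx) 2)).trans_le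
        (lamMin_mul_dotProduct_self_le G x)
  set w := G⁻¹ *ᵥ r
  have hGw : G *ᵥ w = r := by
    rw [mulVec_mulVec, mul_nonsing_inv _ hG.det_pos.ne'.isUnit, one_mulVec]
  have hd : vnorm (Jᵀ *ᵥ w) ^ 2 = r ⬝ᵥ w := by
    rw [vnorm_sq, dotProduct_mulVec, vecMul_transpose, mulVec_mulVec, hGw]
  have hray : lamMin G * vnorm w ^ 2 ≤ r ⬝ᵥ w := by
    simpa [vnorm_sq, hGw, dotProduct_comm] using lamMin_mul_dotProduct_self_le G w
  have hcs := dotProduct_le_vnorm_mul_vnorm r w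
  have hlw : lamMin G * vnorm w ≤ vnorm r := by
    rcases (vnorm_nonneg w).eq_or_lt with hw | hw
    · rw [← hw, mul_zero]; exact vnorm_nonneg r
    · nlinarith
  rw [hd]
  calc lamMin G * (r ⬝ᵥ w) ≤ lamMin G * (vnorm r * vnorm w) := by gcongr
    _ = vnorm r * (lamMin G * vnorm w) := by ring
    _ ≤ vnorm r ^ 2 := by rw [sq]; gcongr; exact vnorm_nonneg r

lemma vnorm_transpose_mulVec_inv_mulVec_le {n p : ℕ} (J : Matrix (Fin n) (Fin p) ℝ)
    {r : Fin n → ℝ} {μ ρ : ℝ} (hμ : 0 < μ) (hJ : μ ≤ lamMin (J * Jᵀ)) (hr : vnorm r ≤ ρ) :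
    vnorm (Jᵀ *ᵥ ((J * Jᵀ)⁻¹ *ᵥ r)) ≤ ρ / √μ := by
  set d := Jᵀ *ᵥ ((J * Jᵀ)⁻¹ *ᵥ r)
  have hρ : 0 ≤ ρ := (vnorm_nonneg r).trans hr
  have hd : μ * vnorm d ^ 2 ≤ ρ ^ 2 :=
    calc μ * vnorm d ^ 2 ≤ lamMin (J * Jᵀ) * vnorm d ^ 2 := by gcongr
      _ ≤ vnorm r ^ 2 := lamMin_mul_vnorm_sq_le J r
      _ ≤ ρ ^ 2 := by gcongr; exact vnorm_nonneg r
  rw [le_div_iff₀ (Real.sqrt_pos.mpr hμ),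
    ← pow_le_pow_iff_left₀ (mul_nonneg (vnorm_nonneg d) (Real.sqrt_nonneg μ)) hρ two_ne_zero,
    mul_pow, Real.sq_sqrt hμ.le, mul_comm]
  exact hd

lemma mul_sum_sqrt_one_sub_pow_le_two {η : ℝ} (hη0 : 0 ≤ η) (hη1 : η ≤ 1) (m : ℕ) :
    η * ∑ s ∈ Finset.range m, √((1 - η) ^ s) ≤ 2 := by
  set q := √(1 - η)
  have hq0 : 0 ≤ q := Real.sqrt_nonneg _
  have hq1 : q ≤ 1 := Real.sqrt_le_one.mpr (by linarith)
  have hsq : q ^ 2 = 1 - η := Real.sq_sqrt (by linarith)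
  have hpow (s : ℕ) : √((1 - η) ^ s) = q ^ s := by
    rw [← hsq, ← pow_mul, mul_comm, pow_mul, Real.sqrt_sq (pow_nonneg hq0 s)]
  have hgeom := geom_sum_mul q m
  rw [Finset.sum_congr rfl fun s _ => hpow s]
  calc η * ∑ s ∈ Finset.range m, q ^ s = (1 + q) * (1 - q ^ m) := by
        linear_combination (-(1 + q)) * hgeom + (∑ s ∈ Finset.range m, q ^ s) * hsq
    _ ≤ 2 := by nlinarith [pow_nonneg hq0 m]

section NGD

variable {n p : ℕ} (J : (Fin p → ℝ) → Matrix (Fin n) (Fin p) ℝ) (u : (Fin p → ℝ) → Fin n → ℝ)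
  (y : Fin n → ℝ) (η : ℝ) (θ0 : Fin p → ℝ)

lemma ngd_succ_sub (k : ℕ) :
    ngd J u y η θ0 (k + 1) - ngd J u y η θ0 k =
      -(η • ((J (ngd J u y η θ0 k))ᵀ *ᵥ
        ((J (ngd J u y η θ0 k) * (J (ngd J u y η θ0 k))ᵀ)⁻¹ *ᵥ (u (ngd J u y η θ0 k) - y)))) :=
  sub_sub_cancel_left _ _

lemma vnorm_ngd_succ_sub_le {k : ℕ} {μ ρ : ℝ} (hη : 0 ≤ η) (hμ : 0 < μ)
    (hG : μ ≤ lamMin (J (ngd J u y η θ0 k) * (J (ngd J u y η θ0 k))ᵀ))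
    (hr : vnorm (y - u (ngd J u y η θ0 k)) ≤ ρ) :
    vnorm (ngd J u y η θ0 (k + 1) - ngd J u y η θ0 k) ≤ η * ρ / √μ := by
  rw [ngd_succ_sub, ← neg_smul, vnorm_smul, abs_neg, abs_of_nonneg hη, mul_div_assoc]
  gcongr
  exact vnorm_transpose_mulVec_inv_mulVec_le _ hμ hG (by rwa [vnorm_sub_comm])

lemma ngd_eq_init_of_fin_zero (J : (Fin p → ℝ) → Matrix (Fin 0) (Fin p) ℝ)
    (u : (Fin p → ℝ) → Fin 0 → ℝ) (y : Fin 0 → ℝ) (k : ℕ) : ngd J u y η θ0 k = θ0 := by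
  induction k with
  | zero => rfl
  | succ k ih =>
    have h := ngd_succ_sub J u y η θ0 k
    rwa [Subsingleton.elim (u _ - y) 0, mulVec_zero, mulVec_zero, smul_zero, neg_zero, sub_eq_zero,
      ih] at h

end NGD

theorem ngd_iterates_close_to_init_general {n p : ℕ}
    (u : (Fin p → ℝ) → Fin n → ℝ) (J : (Fin p → ℝ) → Matrix (Fin n) (Fin p) ℝ)
    (y : Fin n → ℝ) (θ0 : Fin p → ℝ)
    -- Condition 1
    (hG0 : (J θ0 * (J θ0)ᵀ).PosDef)
    -- Condition 2
    (C : ℝ) (hC0 : 0 ≤ C)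
    (η : ℝ) (hη0 : 0 < η) (hη : η ≤ (1 - 2 * C) / (1 + C) ^ 2)
    (k : ℕ)
    (hGs : ∀ s : ℕ, s ≤ k →
      4 / 9 * lamMin (J θ0 * (J θ0)ᵀ) ≤
        lamMin (J (ngd J u y η θ0 s) * (J (ngd J u y η θ0 s))ᵀ))
    (hres : ∀ s : ℕ, s ≤ k →
      vnorm (y - u (ngd J u y η θ0 s)) ≤
        Real.sqrt ((1 - η) ^ s) * vnorm (y - u θ0)) :
    vnorm (ngd J u y η θ0 (k + 1) - θ0) ≤
      3 * vnorm (y - u θ0) / Real.sqrt (lamMin (J θ0 * (J θ0)ᵀ)) := by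
  rcases Nat.eq_zero_or_pos n with rfl | hn
  · rw [ngd_eq_init_of_fin_zero, sub_self, show vnorm (0 : Fin p → ℝ) = 0 by simp [vnorm]]
    exact div_nonneg (mul_nonneg zero_le_three (vnorm_nonneg (y - u θ0)))
      (Real.sqrt_nonneg (lamMin (J θ0 * (J θ0)ᵀ)))
  set lam0 := lamMin (J θ0 * (J θ0)ᵀ)
  set R0 := vnorm (y - u θ0)
  have hlam0 : 0 < lam0 := lamMin_pos_of_posDef hn.ne' hG0
  have hη1 : η ≤ 1 := hη.trans ((div_le_one (by positivity)).mpr (by nlinarith))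
  have hsqrt : √(4 / 9 * lam0) = 2 / 3 * √lam0 := by
    rw [Real.sqrt_mul (by norm_num), show (4 / 9 : ℝ) = (2 / 3) ^ 2 by norm_num,
      Real.sqrt_sq (by norm_num)]
  calc vnorm (ngd J u y η θ0 (k + 1) - ngd J u y η θ0 0)
      ≤ ∑ s ∈ Finset.range (k + 1), η * (√((1 - η) ^ s) * R0) / √(4 / 9 * lam0) :=
        vnorm_sub_le_range_sum_of_le (k + 1) fun s hs => vnorm_ngd_succ_sub_le J u y η θ0 hη0.le
          (by positivity) (hGs s (Nat.le_of_lt_succ hs)) (hres s (Nat.le_of_lt_succ hs))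
    _ = (η * ∑ s ∈ Finset.range (k + 1), √((1 - η) ^ s)) * (3 / 2 * R0 / √lam0) := by
        rw [hsqrt, Finset.mul_sum, Finset.sum_mul]
        refine Finset.sum_congr rfl fun s _ => ?_
        field_simp
    _ ≤ 2 * (3 / 2 * R0 / √lam0) := by
        gcongr
        · exact div_nonneg (mul_nonneg (by norm_num) (vnorm_nonneg _)) (Real.sqrt_nonneg _)
        · exact mul_sum_sqrt_one_sub_pow_le_two hη0.le hη1 _
    _ = 3 * R0 / √lam0 := by ring

/-- **Lemma (iterates stay close to initialization).**
Under Conditions 1 and 2 with `0 ≤ C < 1/2` and step size `0 < η ≤ (1-2C)/(1+C)²`: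
if for every `s = 0, …, k` the Gram matrix satisfies
`λmin(G(s)) ≥ (4/9) λmin(G(0))` and the residual satisfies
`‖y - u(s)‖ ≤ (1-η)^{s/2} ‖y - u(0)‖`, then
`‖θ(k+1) - θ(0)‖ ≤ 3 ‖y - u(0)‖ / √λmin(G(0))`. -/
theorem ngd_iterates_close_to_init {n p : ℕ}
    (u : (Fin p → ℝ) → Fin n → ℝ) (J : (Fin p → ℝ) → Matrix (Fin n) (Fin p) ℝ)
    (hJ : ∀ θ, HasFDerivAt u (LinearMap.toContinuousLinearMap ((J θ).mulVecLin)) θ)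
    (hJcont : Continuous J)
    (y : Fin n → ℝ) (θ0 : Fin p → ℝ)
    -- Condition 1
    (hG0 : (J θ0 * (J θ0)ᵀ).PosDef)
    -- Condition 2
    (C : ℝ) (hC0 : 0 ≤ C) (hC : C < 1 / 2)
    (hstab : ∀ θ : Fin p → ℝ,
      vnorm (θ - θ0) ≤ 3 * vnorm (y - u θ0) / Real.sqrt (lamMin (J θ0 * (J θ0)ᵀ)) →
      specNorm (J θ - J θ0) ≤ C / 3 * Real.sqrt (lamMin (J θ0 * (J θ0)ᵀ)))
    (η : ℝ) (hη0 : 0 < η) (hη : η ≤ (1 - 2 * C) / (1 + C) ^ 2)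
    (k : ℕ)
    (hGs : ∀ s : ℕ, s ≤ k →
      4 / 9 * lamMin (J θ0 * (J θ0)ᵀ) ≤
        lamMin (J (ngd J u y η θ0 s) * (J (ngd J u y η θ0 s))ᵀ))
    (hres : ∀ s : ℕ, s ≤ k →
      vnorm (y - u (ngd J u y η θ0 s)) ≤
        Real.sqrt ((1 - η) ^ s) * vnorm (y - u θ0)) :
    vnorm (ngd J u y η θ0 (k + 1) - θ0) ≤
      3 * vnorm (y - u θ0) / Real.sqrt (lamMin (J θ0 * (J θ0)ᵀ)) :=
  ngd_iterates_close_to_init_general u J y θ0 hG0 C hC0 η hη0 hη k hGs hres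
end

section
/- Fix a positive integer k. Suppose the weight vector w ∈ ℝ^{md} satisfies, for every i = 1, …, n, the bound ‖w - w(0)‖₂ ≤ √k · [w_r(0)ᵀ x_i]_{k-}, where [w_r(0)ᵀ x_i]_{k-} denotes the k-th smallest value among {|w_1(0)ᵀx_i|, …, |w_m(0)ᵀx_i|}. Then ‖J(w) - J(w(0))‖₂² ≤ 2nk/m in spectral norm. -/
open Matrix MeasureTheory ProbabilityTheory Real
open scoped BigOperators ENNReal NNReal

/-- Output of the two-layer ReLU network `f(w,a,x) = (1/√m) ∑ᵣ aᵣ ReLU(wᵣᵀ x)` on each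
of the `n` training inputs. -/
noncomputable def netOut {d n m : ℕ} (x : Fin n → Fin d → ℝ) (a : Fin m → ℝ)
    (w : Fin m → Fin d → ℝ) : Fin n → ℝ :=
  fun i => (1 / Real.sqrt m) * ∑ r : Fin m, a r * max (w r ⬝ᵥ x i) 0

/-- Jacobian of `netOut` with respect to the first-layer weights: the `i`-th row is
`(1/√m) (a₁ 1{w₁ᵀxᵢ ≥ 0} xᵢᵀ, …, aₘ 1{wₘᵀxᵢ ≥ 0} xᵢᵀ)`. -/
noncomputable def jacNet {d n m : ℕ} (x : Fin n → Fin d → ℝ) (a : Fin m → ℝ)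
    (w : Fin m → Fin d → ℝ) : Matrix (Fin n) (Fin m × Fin d) ℝ :=
  Matrix.of fun i rj =>
    (1 / Real.sqrt m) * a rj.1 * (if 0 ≤ w rj.1 ⬝ᵥ x i then 1 else 0) * x i rj.2

/-- Gram matrix `G(w) = J(w) J(w)ᵀ`. -/
noncomputable def gramNet {d n m : ℕ} (x : Fin n → Fin d → ℝ) (a : Fin m → ℝ)
    (w : Fin m → Fin d → ℝ) : Matrix (Fin n) (Fin n) ℝ :=
  jacNet x a w * (jacNet x a w)ᵀ

/-- NGD iterates on the first-layer weights:
`w(k+1) = w(k) - η J(k)ᵀ G(k)⁻¹ (u(k) - y)`. -/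
noncomputable def ngdNet {d n m : ℕ} (x : Fin n → Fin d → ℝ) (a : Fin m → ℝ)
    (y : Fin n → ℝ) (η : ℝ) (w0 : Fin m → Fin d → ℝ) : ℕ → Fin m → Fin d → ℝ
  | 0 => w0
  | k + 1 => fun r j =>
      ngdNet x a y η w0 k r j -
        η * (((jacNet x a (ngdNet x a y η w0 k))ᵀ *ᵥ
          ((gramNet x a (ngdNet x a y η w0 k))⁻¹ *ᵥ
            (netOut x a (ngdNet x a y η w0 k) - y))) (r, j))

/-- Limiting Gram matrix `G^∞ᵢⱼ = xᵢᵀxⱼ (π - arccos(xᵢᵀxⱼ))/(2π)`. -/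
noncomputable def ginf {d n : ℕ} (x : Fin n → Fin d → ℝ) : Matrix (Fin n) (Fin n) ℝ :=
  Matrix.of fun i j => x i ⬝ᵥ x j * (Real.pi - Real.arccos (x i ⬝ᵥ x j)) / (2 * Real.pi)

/-- Euclidean norm on the full weight vector `w ∈ ℝ^{md}`. -/
noncomputable def wnorm {d m : ℕ} (w : Fin m → Fin d → ℝ) : ℝ :=
  Real.sqrt (∑ r : Fin m, w r ⬝ᵥ w r)

/-- Product Gaussian initialization measure: `wᵣ ~ N(0, ν² I_d)` i.i.d. -/
noncomputable def gaussInit (d m : ℕ) (ν : ℝ) : Measure (Fin m → Fin d → ℝ) :=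
  Measure.pi fun _ : Fin m => Measure.pi fun _ : Fin d =>
    gaussianReal 0 (Real.toNNReal (ν ^ 2))

/-- Uniform `{±1}` measure on ℝ. -/
noncomputable def signMeasure : Measure ℝ :=
  (PMF.uniformOfFinset ({-1, 1} : Finset ℝ) ⟨-1, by simp⟩).toMeasure

instance : IsProbabilityMeasure signMeasure := by
  unfold signMeasure; infer_instance

/-- Product uniform `{±1}` initialization measure for the output weights. -/
noncomputable def signInit (m : ℕ) : Measure (Fin m → ℝ) :=
  Measure.pi fun _ : Fin m => signMeasure

/-- Joint initialization measure over `(w(0), a)`. -/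
noncomputable def initMeasure (d m : ℕ) (ν : ℝ) :
    Measure ((Fin m → Fin d → ℝ) × (Fin m → ℝ)) :=
  (gaussInit d m ν).prod (signInit m)

/-- The `k`-th smallest element (1-indexed) of a finite multiset of reals. -/
noncomputable def kthSmallest (s : Multiset ℝ) (k : ℕ) : ℝ :=
  (s.sort (· ≤ ·)).getD (k - 1) 0

/-!
The spectral norm is at most the Frobenius norm, and row `i` of `J(w) - J(w(0))` has squared
norm `#Fᵢ / m`, where `Fᵢ` is the set of neurons whose activation on `xᵢ` flips. A flip at
neuron `r` forces `|w_r(0)ᵀxᵢ| ≤ |(w_r - w_r(0))ᵀxᵢ| ≤ ‖w_r - w_r(0)‖`. With `t` the `k`-th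
smallest margin, fewer than `k` neurons have margin below `t`, and since
`∑ᵣ ‖w_r - w_r(0)‖² ≤ k t²`, at most `k` neurons move by `t` or more. Hence `#Fᵢ ≤ 2k`.
-/

open Finset

theorem abs_le_abs_sub_of_not_nonneg_iff {u v : ℝ} (h : ¬(0 ≤ u ↔ 0 ≤ v)) : |v| ≤ |u - v| := by
  rcases le_or_gt 0 u with hu | hu <;> rcases le_or_gt 0 v with hv | hv
  · exact absurd (iff_of_true hu hv) h
  · exact abs_le_abs (by linarith) (by linarith)
  · rw [abs_sub_comm]; exact abs_le_abs (by linarith) (by linarith)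
  · exact absurd (iff_of_false hu.not_ge hv.not_ge) h

theorem List.Pairwise.getD_le_of_mem_drop {α : Type*} [Preorder α] {l : List α}
    (hl : l.Pairwise (· ≤ ·)) {i : ℕ} {z d : α} (hz : z ∈ l.drop i) : l.getD i d ≤ z := by
  rcases lt_or_ge i l.length with hi | hi
  · have hdrop := hl.drop (i := i)
    rw [List.drop_eq_getElem_cons hi] at hz hdrop
    rw [List.getD_eq_getElem l d hi]
    rcases List.mem_cons.1 hz with rfl | hz
    · rfl
    · exact List.rel_of_pairwise_cons hdrop hz
  · simp [List.drop_eq_nil_of_le hi] at hz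

theorem card_filter_lt_kthSmallest_le (s : Multiset ℝ) (k : ℕ) :
    Multiset.card (s.filter (· < kthSmallest s k)) ≤ k - 1 := by
  set l := s.sort (· ≤ ·)
  have hdrop : (l.drop (k - 1)).countP (fun z => decide (z < kthSmallest s k)) = 0 :=
    List.countP_eq_zero.2 fun z hz => by
      rw [decide_eq_true_iff, not_lt]
      exact (s.pairwise_sort (· ≤ ·)).getD_le_of_mem_drop hz
  calc Multiset.card (s.filter (· < kthSmallest s k))
      = (l.take (k - 1) ++ l.drop (k - 1)).countP (fun z => decide (z < kthSmallest s k)) := by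
        rw [List.take_append_drop, ← Multiset.coe_countP, Multiset.sort_eq,
          Multiset.countP_eq_card_filter]
    _ ≤ k - 1 := by
        rw [List.countP_append, hdrop, add_zero]
        exact List.countP_le_length.trans (List.length_take_le _ _)

theorem specNorm_sq_le_sum_sq {ι κ : Type*} [Fintype ι] [Fintype κ] (A : Matrix ι κ ℝ) :
    specNorm A ^ 2 ≤ ∑ i, ∑ j, A i j ^ 2 := by
  have hle : specNorm A ≤ √(∑ i, ∑ j, A i j ^ 2) := by
    refine Real.sSup_le ?_ (Real.sqrt_nonneg _)
    rintro r ⟨v, hv, rfl⟩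
    have hv1 : ∑ j, v j ^ 2 = 1 := by simpa [enorm2, sq] using hv
    refine Real.sqrt_le_sqrt (sum_le_sum fun i _ => ?_)
    calc (A *ᵥ v) i * (A *ᵥ v) i = (∑ j, A i j * v j) ^ 2 := by
          rw [sq]; rfl
      _ ≤ (∑ j, A i j ^ 2) * ∑ j, v j ^ 2 := sum_mul_sq_le_sq_mul_sq _ _ _
      _ = ∑ j, A i j ^ 2 := by rw [hv1, mul_one]
  have hnonneg : 0 ≤ specNorm A :=
    Real.sSup_nonneg fun r ⟨v, _, hr⟩ => hr ▸ Real.sqrt_nonneg _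
  calc specNorm A ^ 2 ≤ √(∑ i, ∑ j, A i j ^ 2) ^ 2 := pow_le_pow_left₀ hnonneg hle 2
    _ = ∑ i, ∑ j, A i j ^ 2 := Real.sq_sqrt (by positivity)

theorem dotProduct_self_nonneg {ι : Type*} [Fintype ι] (v : ι → ℝ) : 0 ≤ v ⬝ᵥ v :=
  sum_nonneg fun _ _ => mul_self_nonneg _

theorem card_le_of_forall_le_of_sqrt_sum_sq_le {ι : Type*} [Fintype ι] {b : ι → ℝ}
    {G : Finset ι} {t : ℝ} {k : ℕ} (hG : ∀ r ∈ G, t ≤ b r ∧ 0 < b r)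
    (hb : √(∑ r, b r ^ 2) ≤ √k * t) :
    #G ≤ k := by
  rcases G.eq_empty_or_nonempty with rfl | ⟨r, hr⟩
  · simp
  have ht : 0 < t := by
    refine pos_of_mul_pos_right ?_ (Real.sqrt_nonneg (k : ℝ))
    calc 0 < b r := (hG r hr).2
      _ ≤ √(∑ r, b r ^ 2) :=
        Real.le_sqrt_of_sq_le (single_le_sum (fun r _ => sq_nonneg (b r)) (mem_univ r))
      _ ≤ √k * t := hb
  have hsum : ∑ r, b r ^ 2 ≤ k * t ^ 2 := by
    simpa [mul_pow] using (Real.sqrt_le_iff.1 hb).2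
  have : (#G : ℝ) * t ^ 2 ≤ k * t ^ 2 :=
    calc (#G : ℝ) * t ^ 2 ≤ ∑ r ∈ G, b r ^ 2 := by
          simpa using G.card_nsmul_le_sum (fun r => b r ^ 2) (t ^ 2)
            fun r hr => pow_le_pow_left₀ ht.le (hG r hr).1 2
      _ ≤ ∑ r, b r ^ 2 :=
          sum_le_sum_of_subset_of_nonneg (subset_univ G) fun r _ _ => sq_nonneg _
      _ ≤ k * t ^ 2 := hsum
  exact_mod_cast le_of_mul_le_mul_right this (by positivity)

section

variable {d m : ℕ}

theorem abs_dotProduct_le_vnorm_mul_vnorm (u v : Fin d → ℝ) : |u ⬝ᵥ v| ≤ vnorm u * vnorm v := by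
  rw [vnorm, vnorm, ← Real.sqrt_mul (dotProduct_self_nonneg u)]
  exact Real.abs_le_sqrt (by simpa [dotProduct, sq] using sum_mul_sq_le_sq_mul_sq univ u v)

theorem wnorm_eq_sqrt_sum_vnorm_sq (v : Fin m → Fin d → ℝ) :
    wnorm v = √(∑ r, vnorm (v r) ^ 2) := by
  simp only [wnorm, vnorm, Real.sq_sqrt (dotProduct_self_nonneg _)]

noncomputable def activationFlips (w0 w : Fin m → Fin d → ℝ) (z : Fin d → ℝ) : Finset (Fin m) :=
  {r | ¬(0 ≤ w r ⬝ᵥ z ↔ 0 ≤ w0 r ⬝ᵥ z)}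

theorem card_activationFlips_le {w0 w : Fin m → Fin d → ℝ} {z : Fin d → ℝ} (hz : vnorm z ≤ 1)
    {k : ℕ} (hw : wnorm (w - w0) ≤ √k * kthSmallest (univ.val.map fun r => |w0 r ⬝ᵥ z|) k) :
    #(activationFlips w0 w z) ≤ 2 * k := by
  set t := kthSmallest (univ.val.map fun r => |w0 r ⬝ᵥ z|) k
  set F := activationFlips w0 w z
  have hmargin : ∀ r ∈ F, |w0 r ⬝ᵥ z| ≤ vnorm (w r - w0 r) ∧ 0 < vnorm (w r - w0 r) := by
    intro r hr
    have hflip : ¬(0 ≤ w r ⬝ᵥ z ↔ 0 ≤ w0 r ⬝ᵥ z) := (mem_filter.1 hr).2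
    have hshift : |w r ⬝ᵥ z - w0 r ⬝ᵥ z| ≤ vnorm (w r - w0 r) := by
      rw [← sub_dotProduct]
      exact (abs_dotProduct_le_vnorm_mul_vnorm _ _).trans
        (mul_le_of_le_one_right (Real.sqrt_nonneg _) hz)
    have hne : w r ⬝ᵥ z ≠ w0 r ⬝ᵥ z := fun h => hflip (h ▸ Iff.rfl)
    exact ⟨(abs_le_abs_sub_of_not_nonneg_iff hflip).trans hshift,
      (abs_pos.2 (sub_ne_zero.2 hne)).trans_le hshift⟩
  have hsmall : #(F.filter fun r => |w0 r ⬝ᵥ z| < t) ≤ k - 1 :=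
    calc #(F.filter fun r => |w0 r ⬝ᵥ z| < t) ≤ #(univ.filter fun r => |w0 r ⬝ᵥ z| < t) :=
          card_le_card (filter_subset_filter _ (subset_univ F))
      _ = Multiset.card ((univ.val.map fun r => |w0 r ⬝ᵥ z|).filter (· < t)) := by
          rw [Multiset.filter_map, Multiset.card_map]; rfl
      _ ≤ k - 1 := card_filter_lt_kthSmallest_le _ k
  have hlarge : #(F.filter fun r => ¬|w0 r ⬝ᵥ z| < t) ≤ k := by
    refine card_le_of_forall_le_of_sqrt_sum_sq_le (b := fun r => vnorm (w r - w0 r)) (t := t)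
      (fun r hr => ?_) ?_
    · obtain ⟨hrF, hrt⟩ := mem_filter.1 hr
      exact ⟨(not_lt.1 hrt).trans (hmargin r hrF).1, (hmargin r hrF).2⟩
    · rwa [← wnorm_eq_sqrt_sum_vnorm_sq]
  rw [← card_filter_add_card_filter_not (fun r => |w0 r ⬝ᵥ z| < t)]
  omega

theorem sum_sq_jacNet_sub_jacNet_row {n : ℕ} {x : Fin n → Fin d → ℝ} {a : Fin m → ℝ}
    (ha : ∀ r, a r ^ 2 = 1) (w0 w : Fin m → Fin d → ℝ) (i : Fin n) :
    ∑ rj, (jacNet x a w - jacNet x a w0) i rj ^ 2 =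
      #(activationFlips w0 w (x i)) / m * (x i ⬝ᵥ x i) := by
  have hentry : ∀ r j, (jacNet x a w - jacNet x a w0) i (r, j) ^ 2 =
      1 / m * (if r ∈ activationFlips w0 w (x i) then 1 else 0) * (x i j * x i j) := by
    intro r j
    have hind :
        ((if 0 ≤ w r ⬝ᵥ x i then 1 else 0) - (if 0 ≤ w0 r ⬝ᵥ x i then 1 else 0) : ℝ) ^ 2 =
          if r ∈ activationFlips w0 w (x i) then 1 else 0 := by
      by_cases h : 0 ≤ w r ⬝ᵥ x i <;> by_cases h0 : 0 ≤ w0 r ⬝ᵥ x i <;>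
        simp [activationFlips, h, h0]
    calc (jacNet x a w - jacNet x a w0) i (r, j) ^ 2
        = (1 / √m) ^ 2 * a r ^ 2 *
            ((if 0 ≤ w r ⬝ᵥ x i then 1 else 0) - (if 0 ≤ w0 r ⬝ᵥ x i then 1 else 0)) ^ 2 *
            (x i j * x i j) := by
          simp only [Matrix.sub_apply, jacNet, of_apply]; ring
      _ = _ := by rw [hind, ha, div_pow, one_pow, Real.sq_sqrt m.cast_nonneg, mul_one]
  simp_rw [Fintype.sum_prod_type, hentry, ← mul_sum, ← sum_mul, ← mul_sum, sum_boole]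
  simp [dotProduct, div_eq_mul_inv, mul_comm]

end

theorem jacobian_perturbation_deterministic_general
    (d n m : ℕ) (x : Fin n → Fin d → ℝ) (a : Fin m → ℝ)
    (hx : ∀ i, vnorm (x i) = 1)
    (ha : ∀ r, a r = 1 ∨ a r = -1)
    (w0 w : Fin m → Fin d → ℝ) (k : ℕ)
    (hw : ∀ i : Fin n,
      wnorm (fun r => w r - w0 r) ≤
        Real.sqrt k *
          kthSmallest (Multiset.map (fun r => |w0 r ⬝ᵥ x i|) Finset.univ.val) k) :
    specNorm (jacNet x a w - jacNet x a w0) ^ 2 ≤ 2 * n * k / m := by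
  have ha2 : ∀ r, a r ^ 2 = 1 := fun r => by rcases ha r with h | h <;> simp [h]
  have hrow : ∀ i, ∑ rj, (jacNet x a w - jacNet x a w0) i rj ^ 2 ≤ 2 * k / m := fun i => by
    rw [sum_sq_jacNet_sub_jacNet_row ha2, Real.sqrt_eq_one.1 (hx i), mul_one]
    gcongr
    exact_mod_cast card_activationFlips_le (hx i).le (hw i)
  calc specNorm (jacNet x a w - jacNet x a w0) ^ 2
      ≤ ∑ i, ∑ rj, (jacNet x a w - jacNet x a w0) i rj ^ 2 := specNorm_sq_le_sum_sq _
    _ ≤ ∑ _i : Fin n, (2 * k / m : ℝ) := sum_le_sum fun i _ => hrow i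
    _ = 2 * n * k / m := by simp only [sum_const, card_univ, Fintype.card_fin, nsmul_eq_mul]; ring

/-- **Lemma (deterministic Jacobian perturbation bound).**
If for every training input `xᵢ` the weight perturbation satisfies
`‖w - w(0)‖ ≤ √k · [wᵣ(0)ᵀxᵢ]_{k-}`, where `[wᵣ(0)ᵀxᵢ]_{k-}` is the `k`-th smallest of
`|w₁(0)ᵀxᵢ|, …, |wₘ(0)ᵀxᵢ|`, then `‖J(w) - J(w(0))‖₂² ≤ 2nk/m`. -/
theorem jacobian_perturbation_deterministic
    (d n m : ℕ) (x : Fin n → Fin d → ℝ) (a : Fin m → ℝ)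
    (hx : ∀ i, vnorm (x i) = 1)
    (ha : ∀ r, a r = 1 ∨ a r = -1)
    (w0 w : Fin m → Fin d → ℝ) (k : ℕ) (hk : 0 < k)
    (hw : ∀ i : Fin n,
      wnorm (fun r => w r - w0 r) ≤
        Real.sqrt k *
          kthSmallest (Multiset.map (fun r => |w0 r ⬝ᵥ x i|) Finset.univ.val) k) :
    specNorm (jacNet x a w - jacNet x a w0) ^ 2 ≤ 2 * n * k / m :=
  jacobian_perturbation_deterministic_general d n m x a hx ha w0 w k hw
end

section
/- Suppose the network is linear in its parameters, i.e., u(θ) = u(θ(0)) + J·(θ - θ(0)) for a fixed matrix J ∈ ℝ^{n×p} with G = JJᵀ invertible. Then the NGD iterates θ(k+1) = θ(k) - η Jᵀ G⁻¹ (u(θ(k)) - y) satisfy y - u(θ(k+1)) = (1 - η)·(y - u(θ(k))) for every k; in particular, with step size η = 1, NGD reaches u(θ(1)) = y in a single iteration. -/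
open Matrix MeasureTheory ProbabilityTheory Real
open scoped BigOperators ENNReal NNReal

namespace Matrix

variable {m p R : Type*} [Fintype p]

theorem affine_apply_sub [NonUnitalNonAssocRing R] {J : Matrix m p R} {u : (p → R) → m → R}
    {θ0 : p → R} (hu : ∀ θ, u θ = u θ0 + J *ᵥ (θ - θ0)) (θ d : p → R) :
    u (θ - d) = u θ - J *ᵥ d := by
  rw [hu (θ - d), hu θ, sub_right_comm, mulVec_sub, add_sub_assoc]

variable [Fintype m] [DecidableEq m] [CommRing R]

theorem mulVec_transpose_mulVec_gram_inv_mulVec (J : Matrix m p R) (hG : IsUnit (J * Jᵀ))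
    (r : m → R) : J *ᵥ (Jᵀ *ᵥ ((J * Jᵀ)⁻¹ *ᵥ r)) = r := by
  rw [mulVec_mulVec, mulVec_mulVec, mul_nonsing_inv _ ((isUnit_iff_isUnit_det _).mp hG),
    one_mulVec]

theorem ngd_step_residual {J : Matrix m p R} (hG : IsUnit (J * Jᵀ)) {u : (p → R) → m → R}
    {θ0 : p → R} (hu : ∀ θ, u θ = u θ0 + J *ᵥ (θ - θ0)) (η : R) (θ : p → R) (y : m → R) :
    y - u (θ - η • (Jᵀ *ᵥ ((J * Jᵀ)⁻¹ *ᵥ (u θ - y)))) = (1 - η) • (y - u θ) := by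
  rw [affine_apply_sub hu, mulVec_smul, mulVec_transpose_mulVec_gram_inv_mulVec J hG]
  module

end Matrix

theorem ngd_linear_network_one_step_general {n p : ℕ}
    (J : Matrix (Fin n) (Fin p) ℝ) (hG : IsUnit (J * Jᵀ))
    (θ0 : Fin p → ℝ) (y : Fin n → ℝ)
    (u : (Fin p → ℝ) → Fin n → ℝ)
    (hu : ∀ θ : Fin p → ℝ, u θ = u θ0 + J *ᵥ (θ - θ0))
    (η : ℝ)
    (θ : ℕ → Fin p → ℝ)
    (hθ : ∀ k : ℕ,
      θ (k + 1) = θ k - η • (Jᵀ *ᵥ ((J * Jᵀ)⁻¹ *ᵥ (u (θ k) - y)))) :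
    (∀ k : ℕ, y - u (θ (k + 1)) = (1 - η) • (y - u (θ k))) ∧
      (η = 1 → u (θ 1) = y) := by
  have step : ∀ k, y - u (θ (k + 1)) = (1 - η) • (y - u (θ k)) := fun k => by
    rw [hθ k, Matrix.ngd_step_residual hG hu]
  refine ⟨step, fun hη => ?_⟩
  simpa [hη, sub_eq_zero, eq_comm] using step 0

/-- **Lemma (NGD on a linearized network converges in one step).**
If the network is linear in its parameters, `u(θ) = u(θ(0)) + J(θ - θ(0))` with
`G = JJᵀ` invertible, then NGD satisfies
`y - u(θ(k+1)) = (1-η)(y - u(θ(k)))` for every `k`; in particular with `η = 1` it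
reaches `u(θ(1)) = y` in one iteration. -/
theorem ngd_linear_network_one_step {n p : ℕ}
    (J : Matrix (Fin n) (Fin p) ℝ) (hG : IsUnit (J * Jᵀ))
    (θ0 : Fin p → ℝ) (y : Fin n → ℝ)
    (u : (Fin p → ℝ) → Fin n → ℝ)
    (hu : ∀ θ : Fin p → ℝ, u θ = u θ0 + J *ᵥ (θ - θ0))
    (η : ℝ)
    (θ : ℕ → Fin p → ℝ) (hθ0 : θ 0 = θ0)
    (hθ : ∀ k : ℕ,
      θ (k + 1) = θ k - η • (Jᵀ *ᵥ ((J * Jᵀ)⁻¹ *ᵥ (u (θ k) - y)))) :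
    (∀ k : ℕ, y - u (θ (k + 1)) = (1 - η) • (y - u (θ k))) ∧
      (η = 1 → u (θ 1) = y) :=
  ngd_linear_network_one_step_general J hG θ0 y u hu η θ hθ
end

section
/- Suppose the network is linear in its parameters, i.e., u(w) = u(w(0)) + J·(w - w(0)) for a fixed matrix J ∈ ℝ^{n×p} with G = JJᵀ invertible. Let w_GD solve the gradient flow w'(t) = Jᵀ(y - u(w(t))) and w_NGD solve the natural gradient flow w'(t) = Jᵀ G⁻¹ (y - u(w(t))), both from the same initialization w(0). Then w_GD(t) = Jᵀ G⁻¹ (I - exp(-Gt))(y - u(w(0))) + w(0) and w_NGD(t) = (1 - e^{-t})·JᵀG⁻¹(y - u(w(0))) + w(0), and the two flows converge to the same limit: lim_{t→∞} w_GD(t) = lim_{t→∞} w_NGD(t) = Jᵀ G⁻¹ (y - u(w(0))) + w(0). -/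
/-! The residual `r = y - u(w)` of a flow `w' = Jᵀ P r` on the affine model obeys the linear
equation `r' = -K r` with `K = J Jᵀ P`, hence `r t = exp (-t K) r 0`; then `w'` is an explicit
function of `t` whose antiderivative is `Jᵀ P K⁻¹ (1 - exp (-t K)) r 0`. Gradient flow is
`P = 1`, `K = G`; natural gradient flow is `P = G⁻¹`, `K = 1`, where `exp (-t K) = e^{-t}`.
Since `G = J Jᵀ` is positive definite, conjugating to the eigenbasis of `G` shows
`exp (-t G) → 0`, so both trajectories tend to `Jᵀ G⁻¹ r 0 + w(0)`. -/

open Matrix MeasureTheory ProbabilityTheory Real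
open scoped BigOperators ENNReal NNReal

open Filter Topology

namespace Matrix
variable {ι κ : Type*} [Fintype ι] [Fintype κ]

theorem hasDerivAt_const_mulVec (M : Matrix ι κ ℝ) {v : ℝ → κ → ℝ} {v' : κ → ℝ} {t : ℝ}
    (hv : HasDerivAt v v' t) : HasDerivAt (fun s => M *ᵥ v s) (M *ᵥ v') t :=
  (LinearMap.toContinuousLinearMap M.mulVecLin).hasFDerivAt.comp_hasDerivAt t hv

variable [DecidableEq ι]

theorem hasDerivAt_exp_smul_apply (A : Matrix ι ι ℝ) (t : ℝ) (i j : ι) :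
    HasDerivAt (fun s : ℝ => NormedSpace.exp (s • A) i j)
      ((NormedSpace.exp (t • A) * A) i j) t := by
  -- any algebra norm gives the entrywise topology, so the derivative passes to the entries
  let _ := Matrix.linftyOpNormedRing (n := ι) (α := ℝ)
  let _ := Matrix.linftyOpNormedAlgebra (n := ι) (α := ℝ) (R := ℝ)
  exact (LinearMap.toContinuousLinearMap (entryLinearMap ℝ ℝ i j)).hasFDerivAt.comp_hasDerivAt t
    (hasDerivAt_exp_smul_const A t)

theorem hasDerivAt_exp_smul_mulVec (A : Matrix ι ι ℝ) {v : ℝ → ι → ℝ} {v' : ι → ℝ} {t : ℝ}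
    (hv : HasDerivAt v v' t) :
    HasDerivAt (fun s => NormedSpace.exp (s • A) *ᵥ v s)
      ((NormedSpace.exp (t • A) * A) *ᵥ v t + NormedSpace.exp (t • A) *ᵥ v') t := by
  rw [hasDerivAt_pi] at hv ⊢
  intro i
  simpa only [mulVec, dotProduct, Pi.add_apply, Pi.mul_apply, ← Finset.sum_add_distrib] using
    HasDerivAt.fun_sum fun j _ => (hasDerivAt_exp_smul_apply A t i j).mul (hv j)

theorem exp_diagonal_real (d : ι → ℝ) :
    NormedSpace.exp (diagonal d) = diagonal fun i => Real.exp (d i) := by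
  rw [exp_diagonal, Real.exp_eq_exp_ℝ]
  congr 1
  ext i
  simp

theorem exp_smul_one_real (s : ℝ) :
    NormedSpace.exp (s • (1 : Matrix ι ι ℝ)) = Real.exp s • 1 := by
  rw [smul_one_eq_diagonal, exp_diagonal_real, ← smul_one_eq_diagonal]

theorem exp_neg_mul_exp (A : Matrix ι ι ℝ) : NormedSpace.exp (-A) * NormedSpace.exp A = 1 := by
  rw [← exp_add_of_commute _ _ (Commute.refl A).neg_left, neg_add_cancel, NormedSpace.exp_zero]

theorem eq_exp_neg_smul_mulVec_of_hasDerivAt {A : Matrix ι ι ℝ} {r : ℝ → ι → ℝ}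
    (hr : ∀ t, HasDerivAt r (-(A *ᵥ r t)) t) (t : ℝ) :
    r t = NormedSpace.exp (-(t • A)) *ᵥ r 0 := by
  have hconst : ∀ s, HasDerivAt (fun s => NormedSpace.exp (s • A) *ᵥ r s) 0 s := fun s => by
    simpa [mulVec_neg, mulVec_mulVec] using hasDerivAt_exp_smul_mulVec A (hr s)
  have h := is_const_of_deriv_eq_zero (fun s => (hconst s).differentiableAt)
    (fun s => (hconst s).deriv) t 0
  rw [zero_smul, NormedSpace.exp_zero, one_mulVec] at h
  rw [← h, mulVec_mulVec, exp_neg_mul_exp, one_mulVec]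

theorem hasDerivAt_inv_mulVec_one_sub_exp_neg_smul_mulVec {A : Matrix ι ι ℝ} (hA : IsUnit A)
    (b : ι → ℝ) (t : ℝ) :
    HasDerivAt (fun s => A⁻¹ *ᵥ ((1 - NormedSpace.exp (-(s • A))) *ᵥ b))
      (NormedSpace.exp (-(t • A)) *ᵥ b) t := by
  have h := hasDerivAt_exp_smul_mulVec (-A) (hasDerivAt_const t b)
  simp only [smul_neg, mulVec_zero, add_zero] at h
  convert hasDerivAt_const_mulVec A⁻¹ (h.const_sub b) using 1
  · ext1 s
    rw [sub_mulVec, one_mulVec]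
  · have hc : Commute (NormedSpace.exp (-(t • A))) A :=
      ((Commute.refl A).smul_left t).neg_left.exp_left
    rw [mul_neg, neg_mulVec, neg_neg, hc.eq, mulVec_mulVec, ← mul_assoc,
      nonsing_inv_mul _ ((isUnit_iff_isUnit_det A).mp hA), one_mul]

theorem tendsto_exp_neg_smul_atTop_zero {A : Matrix ι ι ℝ} (hA : A.PosDef) :
    Tendsto (fun t : ℝ => NormedSpace.exp (-(t • A))) atTop (𝓝 0) := by
  set U : Matrix ι ι ℝ := (hA.1.eigenvectorUnitary : Matrix ι ι ℝ)
  set d := hA.1.eigenvalues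
  have hUU : star U * U = 1 := Unitary.coe_star_mul_self _
  have hU : IsUnit U := IsUnit.of_mul_eq_one_right _ hUU
  have hA' : A = U * diagonal d * U⁻¹ := by
    rw [inv_eq_left_inv hUU]
    simpa using hA.1.spectral_theorem
  have hexp : ∀ t : ℝ,
      NormedSpace.exp (-(t • A)) = U * diagonal (fun i => Real.exp (-(t * d i))) * U⁻¹ := by
    intro t
    rw [← exp_diagonal_real, ← exp_conj _ _ hU, hA',
      show (fun i => -(t * d i)) = fun i => -(t • d) i from rfl, ← diagonal_neg,
      diagonal_smul, mul_neg, neg_mul, mul_smul_comm, smul_mul_assoc]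
  have hdiag : Tendsto (fun t : ℝ => diagonal (fun i => Real.exp (-(t * d i)))) atTop (𝓝 0) := by
    rw [← diagonal_zero]
    refine ((continuous_id.matrix_diagonal).tendsto _).comp (tendsto_pi_nhds.2 fun i => ?_)
    exact Real.tendsto_exp_neg_atTop_nhds_zero.comp
      (tendsto_id.atTop_mul_const (hA.eigenvalues_pos i))
  have hconj := ((show Continuous fun M => U * M * U⁻¹ by fun_prop).tendsto 0).comp hdiag
  rw [mul_zero, zero_mul] at hconj
  exact hconj.congr fun t => (hexp t).symm

end Matrix

theorem affine_preconditioned_flow_eq {ι κ : Type*} [Fintype ι] [DecidableEq ι] [Fintype κ]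
    {J : Matrix ι κ ℝ} {P : Matrix ι ι ℝ} (hK : IsUnit (J * Jᵀ * P))
    {u : (κ → ℝ) → ι → ℝ} {w₀ : κ → ℝ} (hu : ∀ w, u w = u w₀ + J *ᵥ (w - w₀)) {y : ι → ℝ}
    {w : ℝ → κ → ℝ} (hw₀ : w 0 = w₀) (hw : ∀ t, HasDerivAt w (Jᵀ *ᵥ (P *ᵥ (y - u (w t)))) t) :
    w = fun t => Jᵀ *ᵥ (P *ᵥ ((J * Jᵀ * P)⁻¹ *ᵥ
      ((1 - NormedSpace.exp (-(t • (J * Jᵀ * P)))) *ᵥ (y - u w₀)))) + w₀ := by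
  set K := J * Jᵀ * P
  have hres : ∀ t, HasDerivAt (fun s => y - u (w s)) (-(K *ᵥ (y - u (w t)))) t := fun t => by
    have h := (hasDerivAt_const_mulVec J ((hw t).sub_const w₀)).const_sub (y - u w₀)
    simp only [mulVec_mulVec, ← Matrix.mul_assoc] at h
    have hfun : (fun s => y - u (w s)) = fun s => y - u w₀ - J *ᵥ (w s - w₀) :=
      funext fun s => by rw [hu]; abel
    rwa [hfun]
  have hcand : ∀ t, HasDerivAt (fun s => Jᵀ *ᵥ (P *ᵥ (K⁻¹ *ᵥ
      ((1 - NormedSpace.exp (-(s • K))) *ᵥ (y - u w₀)))) + w₀)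
      (Jᵀ *ᵥ (P *ᵥ (NormedSpace.exp (-(t • K)) *ᵥ (y - u w₀)))) t := fun t =>
    (hasDerivAt_const_mulVec Jᵀ (hasDerivAt_const_mulVec P
      (hasDerivAt_inv_mulVec_one_sub_exp_neg_smul_mulVec hK _ t))).add_const w₀
  refine eq_of_fderiv_eq (𝕜 := ℝ) (fun t => (hw t).differentiableAt)
    (fun t => (hcand t).differentiableAt) (fun t => ?_) 0 (by simp [hw₀])
  rw [(hw t).hasFDerivAt.fderiv, (hcand t).hasFDerivAt.fderiv,
    eq_exp_neg_smul_mulVec_of_hasDerivAt hres t, hw₀]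

/-- **Lemma (trajectories of GD and NGD flows on a linearized network).**
For a network that is linear in its parameters, `u(w) = u(w(0)) + J(w - w(0))` with
`G = JJᵀ` invertible, the gradient flow and natural gradient flow started at `w(0)`
satisfy `w_GD(t) = JᵀG⁻¹(I - exp(-Gt))(y - u(w(0))) + w(0)` and
`w_NGD(t) = (1 - e^{-t}) JᵀG⁻¹(y - u(w(0))) + w(0)`, and both converge to the same
limit `JᵀG⁻¹(y - u(w(0))) + w(0)` as `t → ∞`. -/
theorem gd_ngd_flow_linear_network {n p : ℕ}
    (J : Matrix (Fin n) (Fin p) ℝ) (hG : IsUnit (J * Jᵀ))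
    (w0 : Fin p → ℝ) (y : Fin n → ℝ)
    (u : (Fin p → ℝ) → Fin n → ℝ)
    (hu : ∀ w : Fin p → ℝ, u w = u w0 + J *ᵥ (w - w0))
    (wGD wNGD : ℝ → Fin p → ℝ)
    (hGD0 : wGD 0 = w0) (hNGD0 : wNGD 0 = w0)
    (hGD : ∀ t : ℝ, HasDerivAt wGD (Jᵀ *ᵥ (y - u (wGD t))) t)
    (hNGD : ∀ t : ℝ,
      HasDerivAt wNGD (Jᵀ *ᵥ ((J * Jᵀ)⁻¹ *ᵥ (y - u (wNGD t)))) t) :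
    (∀ t : ℝ, wGD t =
        Jᵀ *ᵥ ((J * Jᵀ)⁻¹ *ᵥ
          ((1 - NormedSpace.exp (-(t • (J * Jᵀ)))) *ᵥ (y - u w0))) + w0) ∧
      (∀ t : ℝ, wNGD t =
        (1 - Real.exp (-t)) • (Jᵀ *ᵥ ((J * Jᵀ)⁻¹ *ᵥ (y - u w0))) + w0) ∧
      Filter.Tendsto wGD Filter.atTop
        (nhds (Jᵀ *ᵥ ((J * Jᵀ)⁻¹ *ᵥ (y - u w0)) + w0)) ∧
      Filter.Tendsto wNGD Filter.atTop
        (nhds (Jᵀ *ᵥ ((J * Jᵀ)⁻¹ *ᵥ (y - u w0)) + w0)) := by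
  have hGG : J * Jᵀ * (J * Jᵀ)⁻¹ = 1 := mul_nonsing_inv _ ((isUnit_iff_isUnit_det _).mp hG)
  have hwGD := affine_preconditioned_flow_eq (P := 1) (by rwa [Matrix.mul_one]) hu hGD0
    (by simpa only [one_mulVec] using hGD)
  have hwNGD := affine_preconditioned_flow_eq (by rw [hGG]; exact isUnit_one) hu hNGD0 hNGD
  simp only [Matrix.mul_one, one_mulVec] at hwGD
  simp only [hGG, inv_one, one_mulVec, ← neg_smul, exp_smul_one_real] at hwNGD
  have hNGDform : ∀ t, wNGD t = (1 - Real.exp (-t)) • (Jᵀ *ᵥ ((J * Jᵀ)⁻¹ *ᵥ (y - u w0))) + w0 :=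
    fun t => by
      simp only [hwNGD]
      rw [sub_mulVec, one_mulVec, smul_mulVec, one_mulVec, ← mulVec_smul, ← mulVec_smul, sub_smul,
        one_smul]
  refine ⟨congrFun hwGD, hNGDform, ?_, ?_⟩
  · have hGpd : (J * Jᵀ).PosDef := by
      simpa using (posSemidef_self_mul_conjTranspose J).posDef_iff_isUnit.mpr hG
    have hlim := ((show Continuous fun E : Matrix (Fin n) (Fin n) ℝ =>
      Jᵀ *ᵥ ((J * Jᵀ)⁻¹ *ᵥ ((1 - E) *ᵥ (y - u w0))) + w0 by fun_prop).tendsto 0).comp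
        (tendsto_exp_neg_smul_atTop_zero hGpd)
    rw [sub_zero, one_mulVec] at hlim
    rwa [hwGD]
  · have hlim := ((tendsto_const_nhds (x := (1 : ℝ)).sub
      tendsto_exp_neg_atTop_nhds_zero).smul_const (Jᵀ *ᵥ ((J * Jᵀ)⁻¹ *ᵥ (y - u w0)))).add_const w0
    rw [sub_zero, one_smul] at hlim
    exact hlim.congr fun t => (hNGDform t).symm
end
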